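/- arXiv:2203.14937 — 6 statements merged into one kernel-verified Lean document; each statement's English description precedes it below -/
import Mathlib

section
/- Let m ≥ 1 and h ≥ 1 be natural numbers and let A be an m×m complex matrix that is NOT diagonalizable (there is no invertible m×m complex matrix P with P⁻¹·A·P diagonal). Then the block matrix M(A,h) is not diagonalizable: there is no invertible (hm)×(hm) complex matrix Q such that Q⁻¹·M(A,h)·Q is diagonal. -/
/-!
If `Q⁻¹ M Q` is diagonal, the columns of `Q` are eigenvectors of `M = M(A, h)`. Writing an
eigenvector `v` of `M` with eigenvalue `μ` in blocks `v₀, …, v_{h-1}`, the identity blocks give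
`v_{i-1} = μ vᵢ`, hence `v₀ = μ^(h-1) v_{h-1}`, and the top row gives
`A v_{h-1} = μ v₀ = μ^h v_{h-1}`. So the last blocks of the columns of `Q` are eigenvectors
of `A` (or zero); as `Q` is invertible they span `ℂ^m`, and a spanning set of eigenvectors
contains an eigenbasis, which diagonalizes `A`.
-/

open Matrix

/-- The block matrix `M(A,h)` with `A` in the top-right block, identity blocks
on the first block subdiagonal, and zero blocks elsewhere. -/
def liftBlock {m : ℕ} (h : ℕ) (A : Matrix (Fin m) (Fin m) ℂ) :
    Matrix (Fin h × Fin m) (Fin h × Fin m) ℂ :=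
  fun p q =>
    if p.1.val = 0 ∧ q.1.val = h - 1 then A p.2 q.2
    else if p.1.val = q.1.val + 1 then (if p.2 = q.2 then 1 else 0)
    else 0

namespace Matrix

variable {R K n : Type*} [Fintype n] [DecidableEq n]

theorem mulVec_col_of_isDiag_conj [CommRing R] {M Q : Matrix n n R} (hQ : IsUnit Q)
    (hD : (Q⁻¹ * M * Q).IsDiag) (j : n) :
    M *ᵥ Q.col j = (Q⁻¹ * M * Q) j j • Q.col j := by
  have hMQ : M * Q = Q * diagonal (Q⁻¹ * M * Q).diag := by
    rw [hD.diagonal_diag, ← Matrix.mul_assoc, ← Matrix.mul_assoc,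
      mul_nonsing_inv _ ((isUnit_iff_isUnit_det Q).mp hQ), Matrix.one_mul]
  ext i
  change (M * Q) i j = _
  rw [hMQ, mul_diagonal]
  exact mul_comm _ _

theorem exists_isDiag_conj_of_span_eigenvectors [Field K] {A : Matrix n n K}
    (hA : ⊤ ≤ Submodule.span K {v | ∃ μ : K, A *ᵥ v = μ • v}) :
    ∃ P : Matrix n n K, IsUnit P ∧ (P⁻¹ * A * P).IsDiag := by
  let b₀ := Module.Basis.ofSpan hA
  let b := b₀.reindex (b₀.indexEquiv (Pi.basisFun K n))
  have hb : ∀ j, ∃ μ : K, A *ᵥ b j = μ • b j := fun j =>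
    Module.Basis.ofSpan_subset hA ⟨_, (b₀.reindex_apply _ j).symm⟩
  choose μ hμ using hb
  let P := (Pi.basisFun K n).toMatrix b
  have : Invertible P := (Pi.basisFun K n).invertibleToMatrix b
  have hAP : A * P = P * diagonal μ := by
    ext i j
    rw [mul_diagonal]
    simpa [P, mul_apply, mulVec, dotProduct, mul_comm, Module.Basis.toMatrix_apply]
      using congrFun (hμ j) i
  refine ⟨P, isUnit_of_invertible P, ?_⟩
  rw [Matrix.mul_assoc, hAP, inv_mul_cancel_left_of_invertible]
  exact isDiag_diagonal μ

end Matrix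

def lastBlock (R : Type*) [Semiring R] (n m : ℕ) :
    (Fin (n + 1) × Fin m → R) →ₗ[R] (Fin m → R) :=
  LinearMap.funLeft R R fun l => (Fin.last n, l)

section LiftBlock

variable {m n : ℕ}

theorem lastBlock_surjective {R : Type*} [Semiring R] : Function.Surjective (lastBlock R n m) :=
  LinearMap.funLeft_surjective_of_injective _ _ _ fun _ _ h => (Prod.mk.inj h).2

variable (A : Matrix (Fin m) (Fin m) ℂ) (v : Fin (n + 1) × Fin m → ℂ)

theorem liftBlock_mulVec_zero (k : Fin m) :
    (liftBlock (n + 1) A *ᵥ v) (0, k) = (A *ᵥ lastBlock ℂ n m v) k := by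
  simp only [mulVec, dotProduct, Fintype.sum_prod_type]
  rw [Finset.sum_eq_single (Fin.last n)]
  · simp [liftBlock, lastBlock]
  · intro i _ hi
    apply Finset.sum_eq_zero
    intro l _
    have : (i : ℕ) ≠ n := fun h => hi (Fin.ext h)
    simp [liftBlock, this]
  · simp

theorem liftBlock_mulVec_succ (i : Fin n) (k : Fin m) :
    (liftBlock (n + 1) A *ᵥ v) (i.succ, k) = v (i.castSucc, k) := by
  simp only [mulVec, dotProduct, Fintype.sum_prod_type]
  rw [Finset.sum_eq_single i.castSucc, Finset.sum_eq_single k]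
  · simp [liftBlock]
  · intro l _ hl
    simp [liftBlock, Ne.symm hl]
  · simp
  · intro j _ hj
    apply Finset.sum_eq_zero
    intro l _
    have : (i : ℕ) ≠ j := fun h => hj (Fin.ext h.symm)
    simp [liftBlock, this]
  · simp

theorem mulVec_lastBlock_of_liftBlock_mulVec_eq_smul {μ : ℂ}
    (hv : liftBlock (n + 1) A *ᵥ v = μ • v) :
    A *ᵥ lastBlock ℂ n m v = μ ^ (n + 1) • lastBlock ℂ n m v := by
  have hfirst : ∀ (i : Fin (n + 1)) k, v (0, k) = μ ^ (i : ℕ) * v (i, k) := by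
    intro i k
    induction i using Fin.induction with
    | zero => simp
    | succ i ih =>
      rw [ih, ← liftBlock_mulVec_succ A v, hv]
      simp [pow_succ, mul_assoc]
  ext k
  rw [← liftBlock_mulVec_zero, hv]
  simp [lastBlock, hfirst (Fin.last n), pow_succ', mul_assoc]

end LiftBlock

theorem liftBlock_not_diagonalizable_general {m h : ℕ} (hh : 1 ≤ h)
    (A : Matrix (Fin m) (Fin m) ℂ)
    (hA : ¬ ∃ P : Matrix (Fin m) (Fin m) ℂ, IsUnit P ∧ (P⁻¹ * A * P).IsDiag) :
    ¬ ∃ Q : Matrix (Fin h × Fin m) (Fin h × Fin m) ℂ,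
        IsUnit Q ∧ (Q⁻¹ * liftBlock h A * Q).IsDiag := by
  rintro ⟨Q, hQ, hD⟩
  obtain ⟨n, rfl⟩ := Nat.exists_eq_add_of_le' hh
  apply hA
  apply exists_isDiag_conj_of_span_eigenvectors
  have hspan : Submodule.span ℂ (Set.range (lastBlock ℂ n m ∘ Q.col)) = ⊤ := by
    rw [Set.range_comp, Submodule.span_image, ← range_mulVecLin,
      LinearMap.range_eq_top.mpr (mulVec_surjective_iff_isUnit.mpr hQ), Submodule.map_top,
      LinearMap.range_eq_top]
    exact lastBlock_surjective
  rw [← hspan]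
  refine Submodule.span_mono ?_
  rintro _ ⟨j, rfl⟩
  exact ⟨_, mulVec_lastBlock_of_liftBlock_mulVec_eq_smul A _
    (mulVec_col_of_isDiag_conj hQ hD j)⟩

theorem liftBlock_not_diagonalizable {m h : ℕ} (hm : 1 ≤ m) (hh : 1 ≤ h)
    (A : Matrix (Fin m) (Fin m) ℂ)
    (hA : ¬ ∃ P : Matrix (Fin m) (Fin m) ℂ, IsUnit P ∧ (P⁻¹ * A * P).IsDiag) :
    ¬ ∃ Q : Matrix (Fin h × Fin m) (Fin h × Fin m) ℂ,
        IsUnit Q ∧ (Q⁻¹ * liftBlock h A * Q).IsDiag :=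
  liftBlock_not_diagonalizable_general hh A hA
end

section
/- Let m ≥ 1 and h ≥ 1 be natural numbers and let A be an m×m complex matrix. Then the h-th power of the block matrix M(A,h) is block diagonal with every diagonal block equal to A: for all indices (i,k) and (j,l) in Fin h × Fin m, one has (M(A,h)^h) (i,k) (j,l) = A k l if i = j, and = 0 if i ≠ j. -/
/-! Right multiplication by `M(A,h)` moves each block column one step to the left, except that
block column `0`, multiplied by `A`, becomes the last block column. By induction, for `n ≤ h` the
block `(i, j)` of `M(A,h) ^ n` is the identity when `i = j + n`, is `A` when `i + h = j + n`, and
vanishes otherwise; at `n = h` only the diagonal blocks `A` survive. -/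

open Matrix

section

variable {m h : ℕ} (A : Matrix (Fin m) (Fin m) ℂ)

lemma liftBlock_apply_of_succ_lt (r q : Fin h × Fin m) (hq : q.1.val + 1 < h) :
    liftBlock h A r q = if r = (⟨q.1.val + 1, hq⟩, q.2) then 1 else 0 := by
  simp only [liftBlock, Prod.ext_iff, Fin.ext_iff]
  split_ifs <;> first | omega | simp_all

lemma liftBlock_apply_of_succ_eq (r q : Fin h × Fin m) (hq : q.1.val + 1 = h) :
    liftBlock h A r q = if r.1.val = 0 then A r.2 q.2 else 0 := by
  have := r.1.isLt
  simp only [liftBlock]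
  split_ifs <;> first | rfl | omega

lemma mul_liftBlock_apply_of_succ_lt {ι : Type*} [Fintype ι]
    (X : Matrix ι (Fin h × Fin m) ℂ) (p : ι) (q : Fin h × Fin m) (hq : q.1.val + 1 < h) :
    (X * liftBlock h A) p q = X p (⟨q.1.val + 1, hq⟩, q.2) := by
  simp [mul_apply, liftBlock_apply_of_succ_lt A _ q hq]

lemma mul_liftBlock_apply_of_succ_eq {ι : Type*} [Fintype ι]
    (X : Matrix ι (Fin h × Fin m) ℂ) (p : ι) (q : Fin h × Fin m) (hq : q.1.val + 1 = h) :
    (X * liftBlock h A) p q = ∑ l, X p (⟨0, by omega⟩, l) * A l q.2 := by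
  rw [mul_apply, Fintype.sum_prod_type, Finset.sum_eq_single (⟨0, by omega⟩ : Fin h)]
  · simp [liftBlock_apply_of_succ_eq A _ q hq]
  · intro i _ hi
    simp [liftBlock_apply_of_succ_eq A _ q hq, Fin.val_ne_iff.mpr hi]
  · simp

lemma liftBlock_pow_apply {n : ℕ} (hn : n ≤ h) (p q : Fin h × Fin m) :
    (liftBlock h A ^ n) p q =
      if p.1.val + h = q.1.val + n then A p.2 q.2
      else if p.1.val = q.1.val + n then (1 : Matrix (Fin m) (Fin m) ℂ) p.2 q.2
      else 0 := by
  induction n generalizing q with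
  | zero =>
    have := p.1.isLt
    simp only [pow_zero, one_apply, Prod.ext_iff, Fin.ext_iff, add_zero]
    split_ifs <;> first | omega | simp_all
  | succ n ih =>
    rw [pow_succ]
    by_cases hq : q.1.val + 1 < h
    · rw [mul_liftBlock_apply_of_succ_lt A _ p q hq, ih (by omega)]
      simp only [add_assoc, add_comm 1 n]
    · have hq : q.1.val + 1 = h := by omega
      have h_not_wrap : ¬ p.1.val + h = n := by omega
      have h_wrap_iff : p.1.val + h = q.1.val + (n + 1) ↔ p.1.val = n := by omega
      have h_not_shift : ¬ p.1.val = q.1.val + (n + 1) := by omega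
      simp only [mul_liftBlock_apply_of_succ_eq A _ p q hq, ih (by omega), zero_add,
        if_neg h_not_wrap, h_wrap_iff, if_neg h_not_shift]
      split_ifs
      · rw [← mul_apply, one_mul]
      · simp

end

theorem liftBlock_pow_h_general {m h : ℕ}
    (A : Matrix (Fin m) (Fin m) ℂ) :
    ∀ p q : Fin h × Fin m,
      (liftBlock h A ^ h) p q = if p.1 = q.1 then A p.2 q.2 else 0 := by
  intro p q
  rw [liftBlock_pow_apply A le_rfl]
  have := q.1.isLt
  simp only [add_left_inj, Fin.ext_iff]
  split_ifs <;> first | rfl | omega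

theorem liftBlock_pow_h {m h : ℕ} (hm : 1 ≤ m) (hh : 1 ≤ h)
    (A : Matrix (Fin m) (Fin m) ℂ) :
    ∀ p q : Fin h × Fin m,
      (liftBlock h A ^ h) p q = if p.1 = q.1 then A p.2 q.2 else 0 :=
  liftBlock_pow_h_general A
end

section
/- Let m ≥ 1 and h ≥ 1 be natural numbers and let A be an m×m complex matrix. Then the characteristic polynomial of the block matrix M(A,h) equals the composition of the characteristic polynomial of A with X^h: charpoly(M(A,h)) = (charpoly A).comp(X^h). -/
/-!
Write `M = M(A, h)` and `h = n + 1`. Blockwise `M = S ⊗ I + E₀ₙ ⊗ A`, with `S` the subdiagonal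
shift and `E₀ₙ` the top-right matrix unit of size `h`. Right multiplication by the unipotent
matrix `U = T ⊗ I`, `T i j = t ^ (j - i)` for `i ≤ j`, is the column operation that pushes all
powers of `t` into the top block row: `(t • 1 - M) * U` has top block row
`(t I, t² I, …, tʰ I - A)` and only `-I` blocks on the subdiagonal below it. Moving the top block
row to the bottom makes it block triangular with diagonal blocks `-I, …, -I, tʰ I - A`, and the
sign of that row rotation cancels `det (-I)`. Hence `det (t • 1 - M) = det (tʰ • 1 - A)` for
every `t`, which is the claimed identity evaluated at `t`.
-/

open Matrix Polynomial

open scoped Kronecker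

namespace Matrix

theorem sub_kronecker {α l m n p : Type*} [NonUnitalNonAssocRing α]
    (A₁ A₂ : Matrix l m α) (B : Matrix n p α) : (A₁ - A₂) ⊗ₖ B = A₁ ⊗ₖ B - A₂ ⊗ₖ B := by
  ext
  simp [sub_mul]

variable {R : Type*} [CommRing R]

def subdiagShift (R : Type*) [Zero R] [One R] (n : ℕ) : Matrix (Fin n) (Fin n) R :=
  of fun i j => if (i : ℕ) = j + 1 then 1 else 0

def powUpper {n : ℕ} (t : R) : Matrix (Fin n) (Fin n) R :=
  of fun i j => if i ≤ j then t ^ (j - i : ℕ) else 0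

theorem det_powUpper {n : ℕ} (t : R) : (powUpper t : Matrix (Fin n) (Fin n) R).det = 1 := by
  rw [det_of_isUpperTriangular]
  · simp [powUpper]
  · intro i j (hij : j < i)
    simp [powUpper, hij.not_ge]

theorem single_mul_powUpper {n : ℕ} (t : R) :
    single (0 : Fin (n + 1)) (Fin.last n) (1 : R) * powUpper t = single 0 (Fin.last n) 1 := by
  have hlast : (powUpper t : Matrix (Fin (n + 1)) (Fin (n + 1)) R).row (Fin.last n) =
      Pi.single (Fin.last n) 1 := by
    ext j
    simp only [row_apply, powUpper, of_apply, Fin.last_le_iff, Pi.single_apply]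
    split_ifs with h <;> simp [h]
  rw [single_mul_eq_updateRow_zero, hlast, one_smul, single_eq_updateRow_zero]

theorem subdiagShift_mul_apply_zero {α : Type*} {n : ℕ} (M : Matrix (Fin (n + 1)) α R) (j : α) :
    (subdiagShift R (n + 1) * M) 0 j = 0 := by
  simp [subdiagShift, mul_apply]

theorem subdiagShift_mul_apply_succ {α : Type*} {n : ℕ} (M : Matrix (Fin (n + 1)) α R)
    (i : Fin n) (j : α) : (subdiagShift R (n + 1) * M) i.succ j = M i.castSucc j := by
  rw [mul_apply, Finset.sum_eq_single i.castSucc]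
  · simp [subdiagShift]
  · intro k _ hk
    simp only [subdiagShift, of_apply, Fin.val_succ, add_left_inj, ite_mul, one_mul, zero_mul]
    exact if_neg fun h => hk (Fin.ext h.symm)
  · simp

theorem smul_powUpper_sub_subdiagShift_mul {n : ℕ} (t : R) :
    t • powUpper t - subdiagShift R (n + 1) * powUpper t =
      updateRow (-subdiagShift R (n + 1)) 0 fun j => t ^ ((j : ℕ) + 1) := by
  ext i j
  rcases Fin.eq_zero_or_eq_succ i with rfl | ⟨i, rfl⟩
  · simp [powUpper, subdiagShift_mul_apply_zero, pow_succ']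
  rw [updateRow_ne (Fin.succ_ne_zero i), sub_apply, subdiagShift_mul_apply_succ]
  simp only [smul_apply, powUpper, of_apply, neg_apply, subdiagShift, Fin.le_def, Fin.val_succ,
    Fin.val_castSucc, smul_eq_mul, mul_ite, mul_zero]
  rcases lt_trichotomy (i : ℕ) j with hij | hij | hij
  · rw [if_pos (show (i : ℕ) + 1 ≤ j by omega), if_pos hij.le, if_neg (by omega), ← pow_succ',
      Nat.sub_add_eq, Nat.sub_add_cancel (by omega), sub_self, neg_zero]
  · rw [if_neg (show ¬(i : ℕ) + 1 ≤ j by omega), if_pos hij.le, if_pos (by omega), hij,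
      Nat.sub_self, pow_zero, zero_sub]
  · rw [if_neg (by omega), if_neg (by omega), if_neg (by omega), sub_zero, neg_zero]

theorem det_updateRow_kronecker_sub {m n : ℕ} (v : Fin (n + 1) → R)
    (A : Matrix (Fin m) (Fin m) R) :
    (updateRow (-subdiagShift R (n + 1)) 0 v ⊗ₖ (1 : Matrix (Fin m) (Fin m) R) -
      single 0 (Fin.last n) 1 ⊗ₖ A).det = (v (Fin.last n) • 1 - A).det := by
  set C := updateRow (-subdiagShift R (n + 1)) 0 v ⊗ₖ (1 : Matrix (Fin m) (Fin m) R) -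
      single 0 (Fin.last n) 1 ⊗ₖ A
  let π : Equiv.Perm (Fin (n + 1) × Fin m) := .prodCongrLeft fun _ => finRotate (n + 1)
  let e : Fin (n + 1) × Fin m ≃ Fin m ⊕ Fin n × Fin m :=
    (finSuccEquivLast.prodCongr (.refl _)).trans optionProdEquiv
  have hblocks : reindex e e (C.submatrix π id) =
      fromBlocks (v (Fin.last n) • 1 - A) (of fun k (j, l) => if k = l then v j.castSucc else 0)
        0 (-1) := by
    ext (k | ⟨i, k⟩) (l | ⟨j, l⟩) <;>
      simp [C, π, e, single_apply, subdiagShift, one_apply, Prod.ext_iff, Fin.ext_iff]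
    · omega
    · omega
    · split_ifs <;> simp_all
  have hsign : (Equiv.Perm.sign π : R) = (-1) ^ (n * m) := by
    simp [π, Equiv.Perm.sign_prodCongrLeft, sign_finRotate, pow_mul]
  have key : (-1) ^ (n * m) * C.det = (-1) ^ (n * m) * (v (Fin.last n) • 1 - A).det := by
    rw [← hsign, ← det_permute, ← det_reindex_self e, hblocks, det_fromBlocks_zero₂₁, det_neg,
      det_one, hsign, Fintype.card_prod, Fintype.card_fin, Fintype.card_fin, mul_one, mul_comm]
  exact (isUnit_neg_one.pow _).mul_left_cancel key

end Matrix

theorem liftBlock_eq_kronecker {m : ℕ} (n : ℕ) (A : Matrix (Fin m) (Fin m) ℂ) :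
    liftBlock (n + 1) A = subdiagShift ℂ (n + 1) ⊗ₖ 1 + single 0 (Fin.last n) 1 ⊗ₖ A := by
  ext ⟨i, k⟩ ⟨j, l⟩
  simp only [liftBlock, Matrix.add_apply, kroneckerMap_apply, subdiagShift, of_apply, single_apply,
    one_apply, Fin.ext_iff, Fin.val_zero, Fin.val_last, Nat.add_sub_cancel, eq_comm (a := 0)]
  split_ifs <;> simp_all

theorem scalar_sub_liftBlock_mul {m : ℕ} (n : ℕ) (A : Matrix (Fin m) (Fin m) ℂ) (t : ℂ) :
    (scalar _ t - liftBlock (n + 1) A) * (powUpper t ⊗ₖ 1) =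
      updateRow (-subdiagShift ℂ (n + 1)) 0 (fun j => t ^ ((j : ℕ) + 1)) ⊗ₖ 1 -
        single 0 (Fin.last n) 1 ⊗ₖ A := by
  rw [liftBlock_eq_kronecker, ← smul_powUpper_sub_subdiagShift_mul, sub_kronecker, sub_mul,
    add_mul, ← mul_kronecker_mul, ← mul_kronecker_mul, single_mul_powUpper, mul_one, mul_one,
    scalar_apply, ← smul_one_eq_diagonal, smul_mul, one_mul, smul_kronecker, sub_sub]

theorem det_scalar_sub_liftBlock {m : ℕ} (n : ℕ) (A : Matrix (Fin m) (Fin m) ℂ) (t : ℂ) :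
    (scalar _ t - liftBlock (n + 1) A).det = (scalar _ (t ^ (n + 1)) - A).det := by
  have hU : (powUpper (n := n + 1) t ⊗ₖ (1 : Matrix (Fin m) (Fin m) ℂ)).det = 1 := by
    rw [det_kronecker, det_powUpper, det_one, one_pow, one_pow, one_mul]
  rw [← mul_one (det _), ← hU, ← det_mul, scalar_sub_liftBlock_mul, det_updateRow_kronecker_sub,
    Fin.val_last, scalar_apply, smul_one_eq_diagonal]

theorem liftBlock_charpoly_general {m h : ℕ} (hh : 1 ≤ h)
    (A : Matrix (Fin m) (Fin m) ℂ) :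
    (liftBlock h A).charpoly = A.charpoly.comp (X ^ h) := by
  obtain ⟨n, rfl⟩ : ∃ n, h = n + 1 := ⟨h - 1, by omega⟩
  refine Polynomial.funext fun t => ?_
  rw [eval_comp, eval_pow, eval_X, eval_charpoly, eval_charpoly, det_scalar_sub_liftBlock]

theorem liftBlock_charpoly {m h : ℕ} (hm : 1 ≤ m) (hh : 1 ≤ h)
    (A : Matrix (Fin m) (Fin m) ℂ) :
    (liftBlock h A).charpoly = A.charpoly.comp (X ^ h) :=
  liftBlock_charpoly_general hh A
end

section
/- Let m ≥ 1 and h ≥ 1 be natural numbers, A an m×m complex matrix, λ, μ ∈ ℂ with μ^h = λ, and v : Fin m → ℂ a vector with A.mulVec v = λ • v. Define the vector w : Fin h × Fin m → ℂ by w (j,k) = μ^(h−1−j) · v k. Then (M(A,h)).mulVec w = μ • w; in particular, if v ≠ 0 and μ ≠ 0 then μ is an eigenvalue of M(A,h). -/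
open Matrix

theorem Matrix.mem_spectrum_of_mulVec_eq_smul {ι K : Type*} [Fintype ι] [DecidableEq ι] [Field K]
    {M : Matrix ι ι K} {μ : K} {x : ι → K} (hx : x ≠ 0) (hMx : M *ᵥ x = μ • x) :
    μ ∈ spectrum K M := by
  rw [← Matrix.spectrum_toLin']
  refine (Module.End.hasEigenvalue_of_hasEigenvector (x := x) ?_).mem_spectrum
  exact Module.End.hasEigenvector_iff.mpr ⟨by simpa using hMx, hx⟩

section liftBlock

variable {m n : ℕ} (A : Matrix (Fin m) (Fin m) ℂ) (w : Fin (n + 1) × Fin m → ℂ)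

theorem liftBlock_succ_mulVec_zero (k : Fin m) :
    (liftBlock (n + 1) A *ᵥ w) (0, k) = (A *ᵥ fun l => w (Fin.last n, l)) k := by
  simp only [mulVec, dotProduct, Fintype.sum_prod_type]
  rw [Finset.sum_eq_single (Fin.last n)]
  · simp [liftBlock]
  · intro j _ hj
    have hj' : (j : ℕ) ≠ n := fun h => hj (Fin.ext h)
    simp [liftBlock, hj']
  · simp

theorem liftBlock_succ_mulVec_succ (i : Fin n) (k : Fin m) :
    (liftBlock (n + 1) A *ᵥ w) (i.succ, k) = w (i.castSucc, k) := by
  simp only [mulVec, dotProduct, Fintype.sum_prod_type]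
  rw [Finset.sum_eq_single i.castSucc, Finset.sum_eq_single k]
  · simp [liftBlock]
  · intro l _ hl
    simp [liftBlock, Ne.symm hl]
  · simp
  · intro j _ hj
    have hj' : (i : ℕ) ≠ j := fun h => hj (Fin.ext h.symm)
    simp [liftBlock, hj']
  · simp

end liftBlock

/-- The powers of `μ` are chosen so that shifting down one block multiplies by `μ`, while the
wrap-around through `A` contributes `λ = μ ^ (n + 1)`. -/
theorem liftBlock_succ_mulVec_eq_smul {m n : ℕ} {A : Matrix (Fin m) (Fin m) ℂ} {μ : ℂ}
    {v : Fin m → ℂ} (hv : A *ᵥ v = μ ^ (n + 1) • v) :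
    liftBlock (n + 1) A *ᵥ (fun p => μ ^ (n - p.1.val) * v p.2)
      = μ • fun p => μ ^ (n - p.1.val) * v p.2 := by
  ext ⟨i, k⟩
  cases i using Fin.cases with
  | zero =>
    rw [liftBlock_succ_mulVec_zero]
    simp only [Fin.val_last, Nat.sub_self, pow_zero, one_mul, hv, Pi.smul_apply, smul_eq_mul,
      Fin.val_zero, Nat.sub_zero]
    ring
  | succ i =>
    rw [liftBlock_succ_mulVec_succ]
    have hi : n - i = n - (i + 1) + 1 := by omega
    simp only [Fin.val_castSucc, Fin.val_succ, Pi.smul_apply, smul_eq_mul, hi]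
    ring

theorem liftBlock_eigenvector_general {m h : ℕ} (hh : 1 ≤ h)
    (A : Matrix (Fin m) (Fin m) ℂ) (lam mu : ℂ) (hmu : mu ^ h = lam)
    (v : Fin m → ℂ) (hv : A.mulVec v = lam • v) :
    (liftBlock h A).mulVec (fun p => mu ^ (h - 1 - p.1.val) * v p.2)
        = mu • (fun p : Fin h × Fin m => mu ^ (h - 1 - p.1.val) * v p.2) ∧
      (v ≠ 0 → mu ≠ 0 → mu ∈ spectrum ℂ (liftBlock h A)) := by
  obtain ⟨n, rfl⟩ : ∃ n, h = n + 1 := ⟨h - 1, by omega⟩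
  subst hmu
  have heig := liftBlock_succ_mulVec_eq_smul hv
  simp only [Nat.add_sub_cancel]
  refine ⟨heig, fun hv0 hmu0 => mem_spectrum_of_mulVec_eq_smul ?_ heig⟩
  obtain ⟨k, hk⟩ := Function.ne_iff.mp hv0
  exact Function.ne_iff.mpr ⟨(0, k), mul_ne_zero (pow_ne_zero _ hmu0) hk⟩

theorem liftBlock_eigenvector {m h : ℕ} (hm : 1 ≤ m) (hh : 1 ≤ h)
    (A : Matrix (Fin m) (Fin m) ℂ) (lam mu : ℂ) (hmu : mu ^ h = lam)
    (v : Fin m → ℂ) (hv : A.mulVec v = lam • v) :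
    (liftBlock h A).mulVec (fun p => mu ^ (h - 1 - p.1.val) * v p.2)
        = mu • (fun p : Fin h × Fin m => mu ^ (h - 1 - p.1.val) * v p.2) ∧
      (v ≠ 0 → mu ≠ 0 → mu ∈ spectrum ℂ (liftBlock h A)) :=
  liftBlock_eigenvector_general hh A lam mu hmu v hv
end

section
/- Let m ≥ 1 and h ≥ 1 be natural numbers and let A be an m×m complex matrix. Then det(M(A,h)) = (−1)^(m·(h−1)) · det A. -/
open Matrix

/-!
Rotating the block columns of `M(A, h)` one step (block column `j` moves to `j + 1 mod h`)
turns it into the block diagonal matrix `diag(A, 1, …, 1)`. That column permutation is a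
product of `m` disjoint `h`-cycles, so its sign is `(-1) ^ (m * (h - 1))`.
-/

theorem Fin.eq_add_one_iff {n : ℕ} (i j : Fin (n + 1)) :
    i = j + 1 ↔ (i.val = 0 ∧ j.val = n) ∨ i.val = j.val + 1 := by
  rw [Fin.ext_iff, Fin.val_add_one]
  split_ifs with hj
  · rw [Fin.ext_iff, val_last] at hj
    omega
  · have := Fin.val_lt_last hj
    omega

theorem det_blockDiagonal_update_one {R o m : Type*} [CommRing R] [Fintype o] [DecidableEq o]
    [Fintype m] [DecidableEq m] (A : Matrix m m R) (i : o) :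
    (blockDiagonal (Function.update 1 i A)).det = A.det := by
  rw [det_blockDiagonal, Fintype.prod_eq_single i fun j hj => by simp [hj]]
  simp

theorem liftBlock_succ_eq_submatrix {m n : ℕ} (A : Matrix (Fin m) (Fin m) ℂ) :
    liftBlock (n + 1) A =
      (reindex (Equiv.prodComm _ _) (Equiv.prodComm _ _)
        (blockDiagonal (Function.update 1 0 A))).submatrix id
        (Equiv.prodCongrLeft fun _ => finRotate (n + 1)) := by
  ext ⟨i, k⟩ ⟨j, l⟩
  simp only [liftBlock, submatrix_apply, reindex_apply, Equiv.prodCongrLeft_apply, id_eq,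
    Equiv.prodComm_symm, Equiv.prodComm_apply, Prod.swap_prod_mk, blockDiagonal_apply,
    finRotate_apply, add_tsub_cancel_right, Fin.eq_add_one_iff]
  by_cases hcorner : i.val = 0 ∧ j.val = n
  · obtain rfl : i = 0 := Fin.ext hcorner.1
    rw [if_pos hcorner, if_pos (Or.inl hcorner), Function.update_self]
  by_cases hsub : i.val = j.val + 1
  · have hi : i ≠ 0 := Fin.ne_of_val_ne (by simp [hsub])
    rw [if_neg hcorner, if_pos hsub, if_pos (Or.inr hsub), Function.update_of_ne hi,
      Pi.one_apply, one_apply]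
  · rw [if_neg hcorner, if_neg hsub, if_neg (not_or_intro hcorner hsub)]

theorem liftBlock_det_general {m h : ℕ} (hh : 1 ≤ h)
    (A : Matrix (Fin m) (Fin m) ℂ) :
    (liftBlock h A).det = (-1 : ℂ) ^ (m * (h - 1)) * A.det := by
  obtain ⟨n, rfl⟩ := Nat.exists_eq_add_of_le' hh
  rw [liftBlock_succ_eq_submatrix, det_permute', det_reindex_self, det_blockDiagonal_update_one,
    Equiv.Perm.sign_prodCongrLeft, sign_finRotate]
  simp [pow_mul']

theorem liftBlock_det {m h : ℕ} (hm : 1 ≤ m) (hh : 1 ≤ h)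
    (A : Matrix (Fin m) (Fin m) ℂ) :
    (liftBlock h A).det = (-1 : ℂ) ^ (m * (h - 1)) * A.det :=
  liftBlock_det_general hh A
end

section
/- Let λ ∈ ℂ with λ ≠ 0, let m ≥ 1 and h ≥ 1 be natural numbers, let μ ∈ ℂ satisfy μ^h = λ, and let ζ = exp(2πi/h). Then there exists an invertible (hm)×(hm) complex matrix P such that P⁻¹·M(J(m,λ),h)·P is block diagonal with m×m blocks, the j-th diagonal block (j ∈ Fin h) being the Jordan block J(m, μ·ζ^j); entrywise, (P⁻¹·M(J(m,λ),h)·P) (j,k) (j',l) = J(m, μ·ζ^j) k l if j = j', and = 0 if j ≠ j'. In particular, every h-th root of λ occurs in exactly one Jordan block of M(J(m,λ),h), of size m. -/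
/-!
Blockwise, `liftBlock h A` is the companion matrix of `X ^ h - A`: whenever `Y ^ h = A` and
`Y S = S D`, the block column `(Y ^ (h - 1) S, …, Y S, S)` intertwines it with `D`.
For `A = J(m, λ)` take `Y_j = ζ ^ j B`, where `B` is the binomial series
`μ (1 + X / λ) ^ (1 / h)` evaluated at the nilpotent part of `A`. Then `Y_j - μ ζ ^ j` is a
polynomial in that nilpotent part with nonzero linear coefficient, so a Jordan chain `S_j`
conjugates `Y_j` to `J(m, μ ζ ^ j)`. The resulting matrix factors as
`diag (B ^ (h - 1 - i)) · (Vandermonde (ζ ^ (h - 1 - i)) ⊗ 1) · diag (S_j)`,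
hence is invertible.
-/

open Matrix Complex

/-- The `m × m` Jordan block with eigenvalue `lam`: `lam` on the diagonal and `1` on the
first superdiagonal. -/
def jordanBlock (m : ℕ) (lam : ℂ) : Matrix (Fin m) (Fin m) ℂ :=
  fun i j => if i = j then lam else if j.val = i.val + 1 then 1 else 0

open PowerSeries

section Toeplitz

variable {R : Type*} [CommRing R]

theorem sum_ite_coeff_mul_ite_coeff {m : ℕ} (f g : R⟦X⟧) (k l : Fin m) :
    ∑ j : Fin m, (if (k : ℕ) ≤ j then coeff (j - k : ℕ) f else 0) *
      (if (j : ℕ) ≤ l then coeff (l - j : ℕ) g else 0) =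
    if (k : ℕ) ≤ l then coeff (l - k : ℕ) (f * g) else 0 := by
  rw [Fin.sum_univ_eq_sum_range (fun j => (if k.val ≤ j then coeff (j - k) f else 0) *
      (if j ≤ l.val then coeff (l - j) g else 0))]
  split_ifs with hkl
  · have hsub : Finset.Ico k.val (l + 1) ⊆ Finset.range m := fun j hj => by
      simp only [Finset.mem_Ico, Finset.mem_range] at hj ⊢; omega
    rw [← Finset.sum_subset hsub fun j _ hj => by
        simp only [Finset.mem_Ico] at hj; split_ifs <;> first | simp | omega,
      Finset.sum_Ico_eq_sum_range, coeff_mul, Finset.Nat.sum_antidiagonal_eq_sum_range_succ_mk,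
      show l.val + 1 - k = l - k + 1 by omega]
    refine Finset.sum_congr rfl fun i hi => ?_
    rw [Finset.mem_range] at hi
    rw [if_pos (by omega), if_pos (by omega), Nat.add_sub_cancel_left, Nat.sub_sub]
  · refine Finset.sum_eq_zero fun j _ => ?_
    split_ifs <;> first | simp | omega

/-- The matrix of multiplication by `f` on `R[X] ⧸ (X ^ m)` in the basis
`X ^ (m - 1), …, X, 1`. -/
noncomputable def toeplitzHom (m : ℕ) : R⟦X⟧ →+* Matrix (Fin m) (Fin m) R where
  toFun f := of fun k l => if (k : ℕ) ≤ l then coeff (l - k : ℕ) f else 0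
  map_one' := by
    ext k l
    simp only [of_apply, coeff_one, one_apply, Fin.ext_iff]
    split_ifs <;> first | rfl | omega
  map_mul' f g := by
    ext k l
    simp only [of_apply, mul_apply, sum_ite_coeff_mul_ite_coeff]
  map_zero' := by ext; simp
  map_add' f g := by
    ext
    simp only [of_apply, map_add, Matrix.add_apply]
    split_ifs <;> simp only [add_zero]

theorem toeplitzHom_apply (m : ℕ) (f : R⟦X⟧) (k l : Fin m) :
    toeplitzHom m f k l = if (k : ℕ) ≤ l then coeff (l - k : ℕ) f else 0 :=
  rfl

theorem toeplitzHom_C (m : ℕ) (a : R) : toeplitzHom m (C a) = scalar (Fin m) a := by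
  ext k l
  simp only [toeplitzHom_apply, coeff_C, scalar_apply, diagonal_apply, Fin.ext_iff]
  split_ifs <;> first | rfl | omega

theorem PowerSeries.coeff_pow_eq_zero_of_lt {g : R⟦X⟧} (hg : constantCoeff g = 0) {n r : ℕ}
    (h : n < r) :
    coeff n (g ^ r) = 0 := by
  obtain ⟨q, rfl⟩ := X_dvd_iff.mpr hg
  rw [mul_pow, coeff_X_pow_mul', if_neg (by omega)]

theorem PowerSeries.coeff_pow_self {g : R⟦X⟧} (hg : constantCoeff g = 0) (r : ℕ) :
    coeff r (g ^ r) = coeff 1 g ^ r := by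
  obtain ⟨q, rfl⟩ := X_dvd_iff.mpr hg
  rw [mul_pow, coeff_X_pow_mul', if_pos le_rfl, Nat.sub_self, coeff_zero_eq_constantCoeff,
    map_pow, ← zero_add 1, coeff_succ_X_mul, coeff_zero_eq_constantCoeff]

theorem toeplitzHom_C_mul (m : ℕ) (a : R) (f : R⟦X⟧) :
    toeplitzHom m (C a * f) = a • toeplitzHom m f := by
  rw [map_mul, toeplitzHom_C, smul_eq_diagonal_mul]
  rfl

/-- Column `k` is `N ^ (m - 1 - k) e`, where `N` is the nilpotent part of `toeplitzHom m f` and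
`e` is the basis vector `1`: a Jordan chain of `toeplitzHom m f`. -/
noncomputable def chainMatrix (m : ℕ) (f : R⟦X⟧) : Matrix (Fin m) (Fin m) R :=
  of fun l k => coeff (m - 1 - l : ℕ) ((f - C (constantCoeff f)) ^ (m - 1 - k : ℕ))

theorem chainMatrix_apply_eq_toeplitzHom {m : ℕ} (f : R⟦X⟧) (l k : Fin m) :
    chainMatrix m f l k =
      toeplitzHom m ((f - C (constantCoeff f)) ^ (m - 1 - k : ℕ)) l
        ⟨m - 1, by have := l.2; omega⟩ := by
  rw [toeplitzHom_apply, if_pos (Nat.le_sub_one_of_lt l.2)]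
  rfl

theorem toeplitzHom_mul_chainMatrix (m : ℕ) (f : R⟦X⟧) :
    toeplitzHom m f * chainMatrix m f =
      chainMatrix m f * toeplitzHom m (C (constantCoeff f) + X) := by
  set g := f - C (constantCoeff f)
  have hg : constantCoeff g = 0 := by simp [g]
  suffices hnil : toeplitzHom m g * chainMatrix m f = chainMatrix m f * toeplitzHom m X by
    have hf : toeplitzHom m f = scalar (Fin m) (constantCoeff f) + toeplitzHom m g := by
      rw [← toeplitzHom_C, ← map_add, add_sub_cancel]
    rw [hf, map_add, toeplitzHom_C, add_mul, mul_add, hnil,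
      (scalar_commute _ (Commute.all _) _).eq]
  ext l k
  have hl : (l : ℕ) ≤ m - 1 := Nat.le_sub_one_of_lt l.2
  calc (toeplitzHom m g * chainMatrix m f) l k
      = toeplitzHom m (g * g ^ (m - 1 - k : ℕ)) l ⟨m - 1, by omega⟩ := by
        simp only [mul_apply, chainMatrix_apply_eq_toeplitzHom, map_mul, g]
    _ = coeff (m - 1 - l : ℕ) (g ^ (m - k : ℕ)) := by
        rw [toeplitzHom_apply, if_pos hl, ← pow_succ', show m - 1 - k + 1 = m - k by omega]
    _ = (chainMatrix m f * toeplitzHom m (X : R⟦X⟧)) l k := by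
        simp only [mul_apply, toeplitzHom_apply, coeff_X]
        by_cases hk : (k : ℕ) = 0
        · rw [hk, coeff_pow_eq_zero_of_lt hg (by omega)]
          exact (Finset.sum_eq_zero fun j _ => by split_ifs <;> first | omega | simp).symm
        · rw [Finset.sum_eq_single ⟨k - 1, by omega⟩ (fun j _ hj => by
            split_ifs <;> first | exact absurd (Fin.ext (by dsimp only; omega)) hj | simp)
            (by simp)]
          rw [if_pos (by dsimp only; omega), if_pos (by dsimp only; omega), mul_one, chainMatrix,
            of_apply]
          congr 2
          dsimp only
          omega

theorem isUnit_chainMatrix {m : ℕ} {f : R⟦X⟧} (hf : IsUnit (coeff 1 f)) :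
    IsUnit (chainMatrix m f) := by
  have hg : constantCoeff (f - C (constantCoeff f)) = 0 := by simp
  have htri : (chainMatrix m f).IsUpperTriangular := fun l k hkl =>
    coeff_pow_eq_zero_of_lt hg (by simp only [id] at hkl; omega)
  rw [isUnit_iff_isUnit_det, det_of_isUpperTriangular htri, IsUnit.prod_univ_iff]
  intro k
  rw [chainMatrix, of_apply, coeff_pow_self hg, map_sub, coeff_C, if_neg one_ne_zero, sub_zero]
  exact hf.pow _

end Toeplitz

theorem PowerSeries.binomialSeries_pow {R A : Type*} [CommRing R] [BinomialRing R] [Ring A]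
    [Algebra R A] (r : R) (n : ℕ) : binomialSeries A r ^ n = binomialSeries A (n * r) := by
  induction n with
  | zero => simp
  | succ n ih => rw [pow_succ, ih, ← binomialSeries_add, Nat.cast_succ, add_one_mul]

section BinomialRoot

variable {K : Type*} [Field K] [CharZero K]

noncomputable def binomialRoot (h : ℕ) (lam mu : K) : K⟦X⟧ :=
  C mu * rescale lam⁻¹ (binomialSeries K (h : K)⁻¹)

theorem binomialRoot_pow {h : ℕ} (hh : h ≠ 0) {lam mu : K} (hlam : lam ≠ 0)
    (hmu : mu ^ h = lam) :
    binomialRoot h lam mu ^ h = C lam + X := by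
  rw [binomialRoot, mul_pow, ← map_pow, ← map_pow, binomialSeries_pow,
    mul_inv_cancel₀ (Nat.cast_ne_zero.mpr hh), ← Nat.cast_one, binomialSeries_nat, pow_one,
    map_add, map_one, rescale_X, hmu, mul_add, mul_one, ← mul_assoc, ← map_mul,
    mul_inv_cancel₀ hlam, map_one, one_mul]

theorem constantCoeff_binomialRoot (h : ℕ) (lam mu : K) :
    constantCoeff (binomialRoot h lam mu) = mu := by
  simp [binomialRoot, ← coeff_zero_eq_constantCoeff_apply, coeff_rescale]

theorem coeff_one_binomialRoot (h : ℕ) (lam mu : K) :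
    coeff 1 (binomialRoot h lam mu) = mu * (h : K)⁻¹ * lam⁻¹ := by
  simp only [binomialRoot, coeff_C_mul, coeff_rescale, pow_one, binomialSeries_coeff,
    Ring.choose_one_right', smul_eq_mul, mul_one]
  ring

end BinomialRoot

theorem toeplitzHom_C_add_X (m : ℕ) (lam : ℂ) :
    toeplitzHom m (C lam + X) = jordanBlock m lam := by
  ext k l
  simp only [toeplitzHom_apply, jordanBlock, map_add, coeff_C, coeff_X, Fin.ext_iff]
  split_ifs <;> first | omega | simp

section BlockCompanion

variable {B : Type*} [Ring B] {h : ℕ}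

def blockCompanion (h : ℕ) (A : B) : Matrix (Fin h) (Fin h) B :=
  of fun i j =>
    if (i : ℕ) = 0 ∧ (j : ℕ) = h - 1 then A else if (i : ℕ) = j + 1 then 1 else 0

theorem blockCompanion_mul_eq_mul_diagonal {A : B} {Y S D : Fin h → B} (hY : ∀ j, Y j ^ h = A)
    (hYS : ∀ j, Y j * S j = S j * D j) :
    blockCompanion h A * of (fun i j : Fin h => Y j ^ (h - 1 - i : ℕ) * S j) =
      of (fun i j : Fin h => Y j ^ (h - 1 - i : ℕ) * S j) * diagonal D := by
  ext i j
  have hi := i.2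
  rw [mul_diagonal, of_apply, mul_assoc, ← hYS, ← mul_assoc, ← pow_succ,
    show h - 1 - i + 1 = h - i by omega, mul_apply]
  by_cases hi₀ : (i : ℕ) = 0
  · rw [Finset.sum_eq_single ⟨h - 1, by omega⟩ (fun k _ hk => by
        rw [blockCompanion, of_apply, if_neg (fun hc => hk (Fin.ext hc.2)), if_neg (by omega),
          zero_mul]) (by simp),
      blockCompanion, of_apply, if_pos ⟨hi₀, rfl⟩, of_apply, hi₀, ← hY j]
    simp
  · rw [Finset.sum_eq_single ⟨i - 1, by omega⟩ (fun k _ hk => by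
        rw [blockCompanion, of_apply, if_neg (by omega), if_neg (fun hc => hk (Fin.ext (by
          dsimp only; omega))), zero_mul]) (by simp),
      blockCompanion, of_apply, if_neg (by omega), if_pos (by dsimp only; omega), of_apply,
      one_mul, show h - 1 - (i - 1) = h - i by omega]

theorem liftBlock_eq_comp {m : ℕ} (A : Matrix (Fin m) (Fin m) ℂ) :
    liftBlock h A = comp _ _ _ _ _ (blockCompanion h A) := by
  ext p q
  simp only [liftBlock, comp_apply, blockCompanion, of_apply]
  split_ifs <;> simp_all [one_apply]

theorem liftBlock_mul_comp_eq_mul_comp_diagonal {m : ℕ} {A : Matrix (Fin m) (Fin m) ℂ}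
    {Y S D : Fin h → Matrix (Fin m) (Fin m) ℂ} (hY : ∀ j, Y j ^ h = A)
    (hYS : ∀ j, Y j * S j = S j * D j) :
    liftBlock h A * comp _ _ _ _ _ (of fun i j : Fin h => Y j ^ (h - 1 - i : ℕ) * S j) =
      comp _ _ _ _ _ (of fun i j : Fin h => Y j ^ (h - 1 - i : ℕ) * S j) *
        comp _ _ _ _ _ (diagonal D) := by
  simpa only [map_mul, compRingEquiv_apply, ← liftBlock_eq_comp] using
    congrArg (compRingEquiv (Fin h) (Fin m) ℂ) (blockCompanion_mul_eq_mul_diagonal hY hYS)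

theorem isUnit_of_smul_pow_mul {K : Type*} [Field K] [Algebra K B] {ζ : K}
    (hζ : IsPrimitiveRoot ζ h) {Y : B} (hY : IsUnit Y) {S : Fin h → B}
    (hS : ∀ j, IsUnit (S j)) :
    IsUnit (of fun i j : Fin h => (ζ ^ (j : ℕ) • Y) ^ (h - 1 - i : ℕ) * S j) := by
  have hV : IsUnit (vandermonde fun i : Fin h => ζ ^ (h - 1 - i : ℕ)) := by
    rw [isUnit_iff_isUnit_det, isUnit_iff_ne_zero, det_vandermonde_ne_zero_iff]
    intro i i' hii'
    have := hζ.pow_inj (by omega) (by omega) hii'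
    exact Fin.ext (by omega)
  have hfactor : (of fun i j : Fin h => (ζ ^ (j : ℕ) • Y) ^ (h - 1 - i : ℕ) * S j) =
      diagonal (fun i : Fin h => Y ^ (h - 1 - i : ℕ)) *
        (algebraMap K B).mapMatrix (vandermonde fun i : Fin h => ζ ^ (h - 1 - i : ℕ)) *
          diagonal S := by
    ext i j
    rw [mul_diagonal, diagonal_mul, of_apply, RingHom.mapMatrix_apply, map_apply,
      vandermonde_apply, smul_pow, ← pow_mul, ← pow_mul, mul_comm (j : ℕ), Algebra.smul_def,
      Algebra.commutes]
  have hdiag {d : Fin h → B} (hd : ∀ i, IsUnit (d i)) : IsUnit (diagonal d) :=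
    (diagonalRingHom (Fin h) B).isUnit_map (Pi.isUnit_iff.mpr hd)
  rw [hfactor]
  exact ((hdiag fun i => hY.pow _).mul (hV.map _)).mul (hdiag hS)

end BlockCompanion

theorem liftBlock_jordan_decomposition_general {m h : ℕ} (hh : 1 ≤ h)
    (lam mu : ℂ) (hlam : lam ≠ 0) (hmu : mu ^ h = lam) :
    ∃ P : Matrix (Fin h × Fin m) (Fin h × Fin m) ℂ, IsUnit P ∧
      ∀ p q : Fin h × Fin m,
        (P⁻¹ * liftBlock h (jordanBlock m lam) * P) p q =
          if p.1 = q.1 then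
            jordanBlock m (mu * Complex.exp (2 * Real.pi * Complex.I / h) ^ p.1.val) p.2 q.2
          else 0 := by
  set ζ := Complex.exp (2 * Real.pi * Complex.I / h)
  have hh₀ : h ≠ 0 := by omega
  have hζ : IsPrimitiveRoot ζ h := Complex.isPrimitiveRoot_exp h hh₀
  have hmu₀ : mu ≠ 0 := by rintro rfl; exact hlam (by rw [← hmu, zero_pow hh₀])
  set b := binomialRoot h lam mu
  set S := fun j : Fin h => chainMatrix m (C (ζ ^ (j : ℕ)) * b)
  have hY (j : Fin h) : (ζ ^ (j : ℕ) • toeplitzHom m b) ^ h = jordanBlock m lam := by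
    rw [smul_pow, ← pow_mul, mul_comm, pow_mul, hζ.pow_eq_one, one_pow, one_smul, ← map_pow,
      binomialRoot_pow hh₀ hlam hmu, toeplitzHom_C_add_X]
  have hYS (j : Fin h) : ζ ^ (j : ℕ) • toeplitzHom m b * S j =
      S j * jordanBlock m (mu * ζ ^ (j : ℕ)) := by
    rw [← toeplitzHom_C_mul, toeplitzHom_mul_chainMatrix, ← toeplitzHom_C_add_X, map_mul,
      constantCoeff_C, constantCoeff_binomialRoot, mul_comm (ζ ^ (j : ℕ)) mu]
  have hS (j : Fin h) : IsUnit (S j) := by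
    refine isUnit_chainMatrix (isUnit_iff_ne_zero.mpr ?_)
    rw [coeff_C_mul, coeff_one_binomialRoot]
    simp [hζ.ne_zero hh₀, hmu₀, hlam, hh₀]
  have hB : IsUnit (toeplitzHom m b) := (isUnit_iff_constantCoeff.mpr (by
    rw [constantCoeff_binomialRoot]; exact hmu₀.isUnit)).map _
  have hP := (isUnit_comp_iff ..).mpr (isUnit_of_smul_pow_mul hζ hB hS)
  refine ⟨_, hP, fun p q => ?_⟩
  rw [mul_assoc, liftBlock_mul_comp_eq_mul_comp_diagonal hY hYS, ← mul_assoc,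
    nonsing_inv_mul _ ((isUnit_iff_isUnit_det _).mp hP), one_mul, comp_apply, diagonal_apply]
  split_ifs <;> rfl

theorem liftBlock_jordan_decomposition {m h : ℕ} (hm : 1 ≤ m) (hh : 1 ≤ h)
    (lam mu : ℂ) (hlam : lam ≠ 0) (hmu : mu ^ h = lam) :
    ∃ P : Matrix (Fin h × Fin m) (Fin h × Fin m) ℂ, IsUnit P ∧
      ∀ p q : Fin h × Fin m,
        (P⁻¹ * liftBlock h (jordanBlock m lam) * P) p q =
          if p.1 = q.1 then
            jordanBlock m (mu * Complex.exp (2 * Real.pi * Complex.I / h) ^ p.1.val) p.2 q.2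
          else 0 :=
  liftBlock_jordan_decomposition_general hh lam mu hlam hmu
end
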